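/- arXiv:2412.09760 — 2 statements merged into one kernel-verified Lean document; each statement's English description precedes it below -/
import Mathlib

section
/- Any realization of the quotient PDFA of A modulo E is state-minimal among all PDFAs whose language model is pointwise E-equivalent to that of A: the number of congruence classes of states of A equals the minimum number of states over all such PDFAs. -/
/-- A probability distribution over `Option α` (the alphabet `α` extended with
the terminal symbol `$`, modeled as `none`). -/
def PDist (α : Type*) [Fintype α] : Type _ :=
  {f : Option α → ℝ // (∀ x, 0 ≤ f x) ∧ ∑ x, f x = 1}

/-- A probabilistic deterministic finite automaton with state space `Q`. -/
structure PDFA (Q : Type*) (α : Type*) [Fintype α] where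
  init : Q
  out : Q → PDist α
  next : Q → α → Q

variable {Q α : Type*} [Fintype α]

/-- Extension of the transition function to strings. -/
def PDFA.run (A : PDFA Q α) (q : Q) (u : List α) : Q := u.foldl A.next q

/-- The language model defined by a PDFA. -/
def PDFA.lm (A : PDFA Q α) (u : List α) : PDist α := A.out (A.run A.init u)

/-- The tolerance/congruence induced on strings by a language model `M` and a
relation `S` on distributions. -/
def strTol (M : List α → PDist α) (S : PDist α → PDist α → Prop) (u u' : List α) : Prop :=
  ∀ w : List α, S (M (u ++ w)) (M (u' ++ w))

/-- The tolerance/congruence induced on states of a PDFA. -/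
def stateTol (A : PDFA Q α) (S : PDist α → PDist α → Prop) (q q' : Q) : Prop :=
  ∀ w : List α, S (A.out (A.run q w)) (A.out (A.run q' w))

/-!
The quotient automaton reads a string `u` into the class of `A.run A.init u`, so its language
model agrees with that of `A` up to `E`. Conversely, if `B` is any automaton whose language model
is `E`-equivalent to that of `A`, two strings leading `B` to the same state have `E`-equivalent
futures in `B`, hence in `A`; so they lead `A` to congruent states. As every state of `A` is
reachable, sending a class to the `B`-state reached by a string reaching one of its members is
injective.
-/

namespace PDFA

variable {Q' : Type*} (A : PDFA Q α)

lemma run_append (q : Q) (u w : List α) : A.run q (u ++ w) = A.run (A.run q u) w :=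
  List.foldl_append ..

lemma stateTol_next {S : PDist α → PDist α → Prop} {q q' : Q} (h : stateTol A S q q') (a : α) :
    stateTol A S (A.next q a) (A.next q' a) :=
  fun w => h (a :: w)

lemma stateTol_equivalence {S : PDist α → PDist α → Prop} (hS : Equivalence S) :
    Equivalence (stateTol A S) :=
  ⟨fun _ _ => hS.refl _, fun h w => hS.symm (h w), fun h₁ h₂ w => hS.trans (h₁ w) (h₂ w)⟩

/-- The quotient automaton; a class emits the distribution of an arbitrary representative. -/
noncomputable def quotient (S : PDist α → PDist α → Prop) : PDFA (Quot (stateTol A S)) α where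
  init := Quot.mk _ A.init
  out c := A.out c.out
  next c a := Quot.lift (fun q => Quot.mk _ (A.next q a))
    (fun _ _ h => Quot.sound (A.stateTol_next h a)) c

lemma quotient_run_mk (S : PDist α → PDist α → Prop) (q : Q) (u : List α) :
    (A.quotient S).run (Quot.mk _ q) u = Quot.mk _ (A.run q u) := by
  induction u generalizing q with
  | nil => rfl
  | cons a u ih => exact ih (A.next q a)

lemma quotient_lm_rel {E : PDist α → PDist α → Prop} (hE : Equivalence E) (u : List α) :
    E ((A.quotient E).lm u) (A.lm u) := by
  have hrep : stateTol A E (Quot.mk (stateTol A E) (A.run A.init u)).out (A.run A.init u) :=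
    (A.stateTol_equivalence hE).eqvGen_iff.mp (Quot.eqvGen_exact (Quot.out_eq _))
  have hinit : (A.quotient E).init = Quot.mk _ A.init := rfl
  rw [lm, hinit, quotient_run_mk]
  exact hrep []

lemma stateTol_run_init_of_run_init_eq {E : PDist α → PDist α → Prop} (hE : Equivalence E)
    {B : PDFA Q' α} (hB : ∀ u, E (B.lm u) (A.lm u)) {u u' : List α}
    (h : B.run B.init u = B.run B.init u') :
    stateTol A E (A.run A.init u) (A.run A.init u') := by
  intro w
  have hBw : B.lm (u ++ w) = B.lm (u' ++ w) := by
    simp only [lm, run_append, h]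
  have hAw : E (A.lm (u ++ w)) (A.lm (u' ++ w)) :=
    hE.trans (hE.symm (hB _)) (hBw ▸ hB _)
  simpa only [lm, run_append] using hAw

lemma card_quot_stateTol_le [Finite Q'] {E : PDist α → PDist α → Prop} (hE : Equivalence E)
    (hreach : ∀ q : Q, ∃ u : List α, A.run A.init u = q)
    (B : PDFA Q' α) (hB : ∀ u, E (B.lm u) (A.lm u)) :
    Nat.card (Quot (stateTol A E)) ≤ Nat.card Q' := by
  choose word hword using hreach
  refine Nat.card_le_card_of_injective (fun c => B.run B.init (word c.out)) fun c d hcd => ?_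
  have hcong := A.stateTol_run_init_of_run_init_eq hE hB hcd
  rw [hword, hword] at hcong
  rw [← Quot.out_eq c, ← Quot.out_eq d]
  exact Quot.sound hcong

end PDFA

/-- Prop. 17 (paper): the number of classes of the state congruence of `A` is
the minimum number of states over all PDFAs whose language model is pointwise
`E`-equivalent to that of `A`. -/
theorem quotient_card_is_minimal {Q : Type} {α : Type} [Fintype α] [Fintype Q]
    (A : PDFA Q α) (E : PDist α → PDist α → Prop) (hE : Equivalence E)
    (hreach : ∀ q : Q, ∃ u : List α, A.run A.init u = q) :
    IsLeast {n : ℕ | ∃ (Q' : Type) (_ : Fintype Q') (B : PDFA Q' α),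
        (∀ u, E (B.lm u) (A.lm u)) ∧ n = Nat.card Q'}
      (Nat.card (Quot (stateTol A E))) := by
  have : Fintype (Quot (stateTol A E)) := Fintype.ofFinite _
  refine ⟨⟨_, inferInstance, A.quotient E, A.quotient_lm_rel hE, rfl⟩, ?_⟩
  rintro n ⟨Q', _, B, hB, rfl⟩
  exact A.card_quot_stateTol_le hE hreach B hB
end

section
/- A language model M is E-regular (its congruence quotient Σ*/≡^M_E is finite) if and only if it is PDFA E-recognizable (there exists a PDFA A with M(u) =_E M_A(u) for all u ∈ Σ*). -/
variable {Q α : Type*} [Fintype α]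

/-!
The strings modulo `≡^M_E` are the states of a PDFA: appending a letter respects the
congruence, and any representative of the class of `u` has an output `E`-equivalent to
`M u`. Conversely, two strings that drive a PDFA recognizing `M` to the same state are
congruent, so the congruence classes are at most as many as the states.
-/

theorem Quot.finite_of_eq_imp_rel {X Y : Type*} [Nonempty X] [Finite Y] {r : X → X → Prop}
    (g : X → Y) (h : ∀ x x', g x = g x' → r x x') : Finite (Quot r) := by
  refine Finite.of_surjective (fun y => Quot.mk r (Function.invFun g y)) ?_
  rintro ⟨x⟩
  exact ⟨g x, Quot.sound (h _ _ (Function.invFun_eq ⟨x, rfl⟩))⟩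

theorem PDFA.run_append_s17 (A : PDFA Q α) (q : Q) (u v : List α) :
    A.run q (u ++ v) = A.run (A.run q u) v :=
  List.foldl_append

section strTol

variable {M : List α → PDist α} {E : PDist α → PDist α → Prop}

theorem strTol_equivalence (hE : Equivalence E) : Equivalence (strTol M E) :=
  ⟨fun _ _ => hE.refl _, fun h w => hE.symm (h w), fun h h' w => hE.trans (h w) (h' w)⟩

theorem strTol.rel {u u' : List α} (h : strTol M E u u') : E (M u) (M u') := by
  simpa using h []

theorem strTol.append_right {u u' : List α} (h : strTol M E u u') (v : List α) :
    strTol M E (u ++ v) (u' ++ v) := fun w => by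
  simpa using h (v ++ w)

theorem strTol_of_run_eq (hE : Equivalence E) {A : PDFA Q α} (hA : ∀ u, E (M u) (A.lm u))
    {u u' : List α} (h : A.run A.init u = A.run A.init u') : strTol M E u u' := fun w => by
  have hlm : A.lm (u ++ w) = A.lm (u' ++ w) := by
    simp only [PDFA.lm, PDFA.run_append_s17, h]
  exact hE.trans (hA _) (hlm ▸ hE.symm (hA _))

end strTol

section quotientPDFA

variable (M : List α → PDist α) (E : PDist α → PDist α → Prop)

noncomputable def quotientPDFA : PDFA (Quot (strTol M E)) α where
  init := Quot.mk _ []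
  out q := M q.out
  next q a := Quot.map (· ++ [a]) (fun _ _ h => h.append_right [a]) q

theorem quotientPDFA.run_mk (v w : List α) :
    (quotientPDFA M E).run (Quot.mk _ v) w = Quot.mk _ (v ++ w) := by
  induction w generalizing v with
  | nil => simp [PDFA.run]
  | cons a w ih => exact (ih (v ++ [a])).trans (by simp)

theorem quotientPDFA.lm_eq (u : List α) :
    (quotientPDFA M E).lm u = M (Quot.mk (strTol M E) u).out :=
  congrArg (fun q => M (Quot.out q)) (quotientPDFA.run_mk M E [] u)

theorem quotientPDFA.rel_lm (hE : Equivalence E) (u : List α) :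
    E (M u) ((quotientPDFA M E).lm u) := by
  have hout : strTol M E (Quot.mk (strTol M E) u).out u :=
    (strTol_equivalence hE).eqvGen_iff.mp (Quot.eqvGen_exact (Quot.out_eq _))
  exact quotientPDFA.lm_eq M E u ▸ hE.symm hout.rel

end quotientPDFA

/-- Thm. 25 (paper): a language model `M` is `E`-regular (its congruence
quotient is finite) iff it is PDFA `E`-recognizable (some PDFA is pointwise
`E`-equivalent to it). -/
theorem regular_iff_recognizable {α : Type} [Fintype α]
    (M : List α → PDist α) (E : PDist α → PDist α → Prop) (hE : Equivalence E) :
    Finite (Quot (strTol M E)) ↔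
      ∃ (Q : Type) (_ : Fintype Q) (A : PDFA Q α), ∀ u, E (M u) (A.lm u) := by
  constructor
  · intro _
    exact ⟨_, Fintype.ofFinite _, quotientPDFA M E, quotientPDFA.rel_lm M E hE⟩
  · rintro ⟨Q, _, A, hA⟩
    exact Quot.finite_of_eq_imp_rel (A.run A.init) fun _ _ => strTol_of_run_eq hE hA
end
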